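/- Let G be a simple 3-regular graph with girth at least 5 and let xy be an edge of G. If there exist two 5-cycles through the edge xy whose vertex sets intersect exactly in {x, y}, then W_1(μ_x^{1/4}, μ_y^{1/4}) = 1, i.e. κ_{1/4}(x,y) = 0. -/

import Mathlib

open scoped ENNReal

namespace RicciFlatCubic

variable {V : Type*}

/-- The probability measure `μ_x^p` on the vertex set: mass `p` at `x`,
mass `(1-p)/deg x` at each neighbor of `x`, and `0` elsewhere. -/
noncomputable def muMeasure (G : SimpleGraph V) [G.LocallyFinite] (p : ℝ≥0∞) (x : V) :
    V → ℝ≥0∞ := fun z =>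
  haveI : DecidableEq V := Classical.decEq V
  haveI : Decidable (G.Adj x z) := Classical.dec _
  if z = x then p
  else if G.Adj x z then (1 - p) / (G.degree x : ℝ≥0∞)
  else 0

/-- `π : V × V → [0,1]` is a transport plan from `μ₁` to `μ₂` if its marginals are `μ₁`, `μ₂`. -/
def IsTransportPlan (μ₁ μ₂ : V → ℝ≥0∞) (π : V → V → ℝ≥0∞) : Prop :=
  (∀ u v, π u v ≤ 1) ∧ (∀ u, ∑' v, π u v = μ₁ u) ∧ (∀ v, ∑' u, π u v = μ₂ v)

/-- The Wasserstein distance `W₁(μ₁, μ₂)`: the infimum over all transport plans of the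
transport cost `∑ d(u,v) π(u,v)`, where `d` is the shortest-path distance in `G`. -/
noncomputable def W1 (G : SimpleGraph V) (μ₁ μ₂ : V → ℝ≥0∞) : ℝ≥0∞ :=
  ⨅ π : {π : V → V → ℝ≥0∞ // IsTransportPlan μ₁ μ₂ π},
    ∑' q : V × V, (G.dist q.1 q.2 : ℝ≥0∞) * π.1 q.1 q.2

/-- The `p`-Ollivier-Ricci curvature `κ_p(x,y) = 1 - W₁(μ_x^p, μ_y^p)` (as a real number),
for a real idleness parameter `p`. -/
noncomputable def kappa (G : SimpleGraph V) [G.LocallyFinite] (p : ℝ) (x y : V) : ℝ :=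
  1 - (W1 G (muMeasure G (ENNReal.ofReal p) x) (muMeasure G (ENNReal.ofReal p) y)).toReal

/-- The edge `xy` lies on two 5-cycles whose vertex sets intersect exactly in `{x, y}`. -/
def TwoPentagons (G : SimpleGraph V) (x y : V) : Prop :=
  ∃ P₁ P₂ : G.Walk x x, P₁.IsCycle ∧ P₂.IsCycle ∧ P₁.length = 5 ∧ P₂.length = 5 ∧
    s(x, y) ∈ P₁.edges ∧ s(x, y) ∈ P₂.edges ∧
    {v | v ∈ P₁.support} ∩ {v | v ∈ P₂.support} = {x, y}

/-- The Petersen graph as the Kneser graph `K(5,2)`. -/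
def petersen : SimpleGraph {s : Finset (Fin 5) // s.card = 2} where
  Adj a b := Disjoint a.1 b.1
  symm := ⟨fun _ _ h => h.symm⟩
  loopless := ⟨by
    rintro ⟨s, hs⟩ h
    change Disjoint s s at h
    rw [disjoint_self] at h
    simp only [Finset.bot_eq_empty] at h
    simp [h] at hs⟩

/-- The Triplex: a 12-cycle on `ℤ/12ℤ` together with six chords. -/
def triplex : SimpleGraph (ZMod 12) :=
  SimpleGraph.fromRel fun i j =>
    j = i + 1 ∨ (i = 1 ∧ j = 7) ∨ (i = 2 ∧ j = 10) ∨ (i = 3 ∧ j = 8) ∨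
      (i = 4 ∧ j = 12) ∨ (i = 5 ∧ j = 9) ∨ (i = 6 ∧ j = 11)

/-- The dodecahedral graph: layer `0` is the outer 5-cycle `a`, layers `1`, `2` form the
middle 10-cycle `b₁ c₁ b₂ c₂ … b₅ c₅`, layer `3` is the inner 5-cycle `d`. -/
def dodecahedral : SimpleGraph (Fin 4 × ZMod 5) :=
  SimpleGraph.fromRel fun p q =>
    (p.1 = 0 ∧ q.1 = 0 ∧ q.2 = p.2 + 1) ∨
    (p.1 = 0 ∧ q.1 = 1 ∧ q.2 = p.2) ∨
    (p.1 = 1 ∧ q.1 = 2 ∧ q.2 = p.2) ∨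
    (p.1 = 2 ∧ q.1 = 1 ∧ q.2 = p.2 + 1) ∨
    (p.1 = 2 ∧ q.1 = 3 ∧ q.2 = p.2) ∨
    (p.1 = 3 ∧ q.1 = 3 ∧ q.2 = p.2 + 1)

/-- The half-dodecahedral graph: inner 5-cycle `y` (`Sum.inl`), outer 10-cycle `x`
(`Sum.inr`), and spokes `yᵢ ~ x_{2i-1}`. -/
def halfDodecahedral : SimpleGraph (ZMod 5 ⊕ ZMod 10) :=
  SimpleGraph.fromRel fun p q =>
    (∃ i : ZMod 5, p = Sum.inl i ∧ q = Sum.inl (i + 1)) ∨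
    (∃ j : ZMod 10, p = Sum.inr j ∧ q = Sum.inr (j + 1)) ∨
    (∃ i : ZMod 5, p = Sum.inl i ∧ q = Sum.inr (2 * (i.val : ZMod 10) - 1))

/-- The two-sided infinite path on `ℤ`. -/
def infinitePath : SimpleGraph ℤ := SimpleGraph.fromRel fun i j => j = i + 1

/-- The cycle `Cₙ` on `ℤ/nℤ`. -/
def cycleZMod (n : ℕ) : SimpleGraph (ZMod n) := SimpleGraph.fromRel fun i j => j = i + 1

noncomputable instance (v : {s : Finset (Fin 5) // s.card = 2}) :
    Fintype (petersen.neighborSet v) := (Set.toFinite _).fintype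

noncomputable instance (v : ZMod 12) : Fintype (triplex.neighborSet v) :=
  (Set.toFinite _).fintype

noncomputable instance (v : Fin 4 × ZMod 5) : Fintype (dodecahedral.neighborSet v) :=
  (Set.toFinite _).fintype

end RicciFlatCubic

/-!
Both measures are uniform, with mass `1/4`, on the closed neighbourhoods
`N[x] = {x, y, w₁, w₂}` and `N[y] = {x, y, u₁, u₂}`, where `x y uᵢ vᵢ wᵢ` are the two pentagons.
Keeping `x` and `y` in place and sending `wᵢ` to `uᵢ` along `wᵢ vᵢ uᵢ` costs `2 · 2 · 1/4 = 1`.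
Conversely, the distance to `{u₁, u₂}` is `1`-Lipschitz, vanishes at `u₁, u₂` and is at least `2`
at `w₁, w₂`, because girth `≥ 5` rules out the `4`-cycles `x y uⱼ wᵢ`; so its integrals against
the two measures differ by at least `1`, and weak Kantorovich duality gives `W₁ ≥ 1`.
-/

namespace SimpleGraph

variable {V : Type*} {G : SimpleGraph V}

theorem Walk.IsCycle.exists_pentagon {x y : V} {P : G.Walk x x}
    (hc : P.IsCycle) (h5 : P.length = 5) (he : s(x, y) ∈ P.edges) :
    ∃ u v w, G.Adj y u ∧ G.Adj u v ∧ G.Adj v w ∧ G.Adj w x ∧ [x, y, u, v, w].Nodup ∧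
      [x, y, u, v, w] ⊆ P.support := by
  rcases P with _ | ⟨h₁, _ | ⟨h₂, _ | ⟨h₃, _ | ⟨h₄, _ | ⟨h₅, _ | ⟨_, _⟩⟩⟩⟩⟩⟩ <;>
    simp only [Walk.length_cons, Walk.length_nil] at h5 <;> try omega
  rename_i a b c d
  have hnd := hc.support_nodup
  simp only [Walk.edges_cons, Walk.edges_nil, List.mem_cons, Sym2.eq_iff, true_and,
    List.not_mem_nil, or_false] at he
  simp only [Walk.support_cons, Walk.support_nil, List.tail_cons, List.nodup_cons,
    List.mem_cons, List.not_mem_nil, or_false, List.nodup_nil] at hnd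
  obtain rfl | rfl : y = a ∨ y = d := by grind
  · exact ⟨_, _, _, h₂, h₃, h₄, h₅, by grind [List.nodup_cons], by simp⟩
  · exact ⟨_, _, _, h₄.symm, h₃.symm, h₂.symm, h₁.symm, by grind [List.nodup_cons], by simp⟩

theorem not_adj_of_five_le_egirth (hg : 5 ≤ G.egirth) {a b c d : V} (hab : G.Adj a b)
    (hbc : G.Adj b c) (hcd : G.Adj c d) (hac : a ≠ c) (hbd : b ≠ d) : ¬ G.Adj d a := by
  intro hda
  have hcyc : (Walk.cons hab (.cons hbc (.cons hcd (.cons hda .nil)))).IsCycle := by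
    simp only [Walk.cons_isCycle_iff, Walk.isPath_def, Walk.support_cons, Walk.support_nil,
      List.nodup_cons, List.mem_cons, List.not_mem_nil, or_false, not_or, List.nodup_nil,
      Walk.edges_cons, Walk.edges_nil, Sym2.eq, Sym2.rel_iff', Prod.mk.injEq, Prod.swap_prod_mk]
    grind [Adj.ne]
  have := le_egirth.mp hg a _ hcyc
  norm_num at this

theorem two_le_dist_of_five_le_egirth (hg : 5 ≤ G.egirth) {w x y u : V} (hwx : G.Adj w x)
    (hxy : G.Adj x y) (hyu : G.Adj y u) (hwy : w ≠ y) (hxu : x ≠ u) (hwu : w ≠ u) :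
    2 ≤ G.dist w u := by
  have h0 : G.dist w u ≠ 0 := dist_ne_zero_iff_ne_and_reachable.mpr
    ⟨hwu, hwx.reachable.trans (hxy.reachable.trans hyu.reachable)⟩
  have h1 : G.dist w u ≠ 1 := fun h =>
    not_adj_of_five_le_egirth hg hwx hxy hyu hwy hxu (dist_eq_one_iff_adj.mp h).symm
  omega

theorem neighborSet_eq_of_degree_eq_three [G.LocallyFinite] {x a b c : V}
    (hd : G.degree x = 3) (ha : G.Adj x a) (hb : G.Adj x b) (hc : G.Adj x c)
    (hnd : [a, b, c].Nodup) : G.neighborSet x = {a, b, c} := by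
  classical
  have hsub : {a, b, c} ⊆ G.neighborFinset x := by
    simp [Finset.insert_subset_iff, ha, hb, hc]
  have hcard : ({a, b, c} : Finset V).card = 3 :=
    Finset.card_eq_three.mpr ⟨a, b, c, by simpa [and_assoc] using hnd⟩
  rw [← G.coe_neighborFinset, ← Finset.eq_of_subset_of_card_le hsub (by simp [hcard, hd])]
  simp

end SimpleGraph

namespace RicciFlatCubic

open SimpleGraph

variable {V : Type*}

section Transport

variable (G : SimpleGraph V) {μ₁ μ₂ : V → ℝ≥0∞}

theorem W1_le_tsum_dist_equiv (e : V ≃ V) (hμ₁ : ∀ u, μ₁ u ≤ 1) (he : ∀ u, μ₂ (e u) = μ₁ u) :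
    W1 G μ₁ μ₂ ≤ ∑' u, (G.dist u (e u) : ℝ≥0∞) * μ₁ u := by
  classical
  let π : V → V → ℝ≥0∞ := fun u v => if v = e u then μ₁ u else 0
  have hπ : IsTransportPlan μ₁ μ₂ π := by
    refine ⟨fun u v => ?_, fun u => tsum_ite_eq _ _, fun v => ?_⟩
    · unfold π
      split_ifs
      exacts [hμ₁ u, zero_le_one]
    · rw [tsum_eq_single (e.symm v) fun u hu => if_neg fun h => hu (by simp [h])]
      simp [← he]
  refine (iInf_le _ ⟨π, hπ⟩).trans_eq ?_
  rw [ENNReal.tsum_prod']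
  simp [π, mul_ite]

/-- The Lipschitz condition is only imposed between the supports: `G.dist` is `0` between
different components, so a potential that is `1`-Lipschitz everywhere would be constant as soon
as `G` is disconnected. -/
theorem tsum_mul_le_W1_add (f : V → ℝ≥0∞)
    (hf : ∀ u v, μ₁ u ≠ 0 → μ₂ v ≠ 0 → f u ≤ G.dist u v + f v) :
    ∑' u, f u * μ₁ u ≤ W1 G μ₁ μ₂ + ∑' v, f v * μ₂ v := by
  rw [W1, ENNReal.iInf_add]
  refine le_iInf ?_
  rintro ⟨π, hπ⟩
  obtain ⟨-, hrow, hcol⟩ := hπ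
  dsimp only
  have hpoint (u v : V) : f u * π u v ≤ G.dist u v * π u v + f v * π u v := by
    by_cases h : π u v = 0
    · simp [h]
    rw [← add_mul]
    refine mul_le_mul_left (hf u v ?_ ?_) _
    · exact ne_bot_of_le_ne_bot h (hrow u ▸ ENNReal.le_tsum v)
    · exact ne_bot_of_le_ne_bot h (hcol v ▸ ENNReal.le_tsum u)
  calc ∑' u, f u * μ₁ u = ∑' q : V × V, f q.1 * π q.1 q.2 := by
        rw [ENNReal.tsum_prod (f := fun u v => f u * π u v)]
        simp_rw [ENNReal.tsum_mul_left, hrow]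
    _ ≤ ∑' q : V × V, (G.dist q.1 q.2 * π q.1 q.2 + f q.2 * π q.1 q.2) :=
        ENNReal.tsum_le_tsum fun q => hpoint q.1 q.2
    _ = _ := by
        rw [ENNReal.tsum_add, ENNReal.tsum_prod (f := fun u v => f v * π u v),
          ENNReal.tsum_comm]
        simp_rw [ENNReal.tsum_mul_left, hcol]

end Transport

theorem tsum_mul_indicator_const (s : Finset V) (f : V → ℝ≥0∞) (c : ℝ≥0∞) :
    ∑' z, f z * (s : Set V).indicator (fun _ => c) z = (∑ z ∈ s, f z) * c := by
  rw [Finset.sum_mul, tsum_eq_sum (s := s) fun z hz => by simp [hz]]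
  exact Finset.sum_congr rfl fun z hz => by simp [hz]

theorem muMeasure_eq_indicator (G : SimpleGraph V) [G.LocallyFinite] {x : V} {d : ℕ}
    (hd : G.degree x = d) :
    muMeasure G ((d : ℝ≥0∞) + 1)⁻¹ x =
      (insert x (G.neighborSet x)).indicator (fun _ => ((d : ℝ≥0∞) + 1)⁻¹) := by
  funext z
  by_cases hzx : z = x
  · simp [muMeasure, hzx]
  by_cases hxz : G.Adj x z
  · have hd0 : d ≠ 0 := hd ▸ (G.degree_pos_iff_exists_adj x).2 ⟨z, hxz⟩ |>.ne'
    have h1 : 1 - ((d : ℝ≥0∞) + 1)⁻¹ = ((d : ℝ≥0∞) + 1)⁻¹ * d := by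
      refine ENNReal.sub_eq_of_eq_add (by simp) ?_
      rw [← mul_add_one, ENNReal.inv_mul_cancel (by simp) (by simp)]
    simp [muMeasure, hzx, hxz, hd, h1, ENNReal.mul_div_cancel_right, hd0]
  · simp [muMeasure, hzx, hxz]

theorem TwoPentagons.exists_vertices {G : SimpleGraph V} {x y : V} (h : TwoPentagons G x y) :
    ∃ u₁ v₁ w₁ u₂ v₂ w₂, G.Adj y u₁ ∧ G.Adj u₁ v₁ ∧ G.Adj v₁ w₁ ∧ G.Adj w₁ x ∧
      G.Adj y u₂ ∧ G.Adj u₂ v₂ ∧ G.Adj v₂ w₂ ∧ G.Adj w₂ x ∧ [x, y, u₁, u₂, w₁, w₂].Nodup := by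
  obtain ⟨P₁, P₂, hc₁, hc₂, hl₁, hl₂, he₁, he₂, hint⟩ := h
  obtain ⟨u₁, v₁, w₁, h₁, h₂, h₃, h₄, hnd₁, hs₁⟩ := hc₁.exists_pentagon hl₁ he₁
  obtain ⟨u₂, v₂, w₂, h₅, h₆, h₇, h₈, hnd₂, hs₂⟩ := hc₂.exists_pentagon hl₂ he₂
  have hxy {z} (h₁ : z ∈ P₁.support) (h₂ : z ∈ P₂.support) : z = x ∨ z = y := by
    simpa using hint.subset ⟨h₁, h₂⟩
  simp only [List.cons_subset, List.nil_subset, and_true] at hs₁ hs₂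
  refine ⟨u₁, v₁, w₁, u₂, v₂, w₂, h₁, h₂, h₃, h₄, h₅, h₆, h₇, h₈, ?_⟩
  have := hxy hs₁.2.2.1
  have := hxy hs₁.2.2.2.2
  grind [List.nodup_cons]

section Configuration

variable {G : SimpleGraph V} {x y u₁ u₂ w₁ w₂ : V}

theorem W1_indicator_le_one (hnd : [x, y, u₁, u₂, w₁, w₂].Nodup)
    (h₁ : G.dist w₁ u₁ ≤ 2) (h₂ : G.dist w₂ u₂ ≤ 2) :
    W1 G (({x, y, w₁, w₂} : Set V).indicator fun _ => 4⁻¹)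
      (({x, y, u₁, u₂} : Set V).indicator fun _ => 4⁻¹) ≤ 1 := by
  classical
  simp only [List.nodup_cons, List.mem_cons, List.not_mem_nil, or_false, not_or,
    List.nodup_nil, and_true] at hnd
  let e : V ≃ V := Equiv.swap w₁ u₁ * Equiv.swap w₂ u₂
  obtain ⟨hex, hey, hew₁, hew₂⟩ : e x = x ∧ e y = y ∧ e w₁ = u₁ ∧ e w₂ = u₂ := by
    simp only [e, Equiv.Perm.mul_apply, Equiv.swap_apply_def]
    grind
  have he : e '' {x, y, w₁, w₂} = {x, y, u₁, u₂} := by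
    simp only [Set.image_insert_eq, Set.image_singleton, hex, hey, hew₁, hew₂]
  have hμ₂ (z : V) : ({x, y, u₁, u₂} : Set V).indicator (fun _ => (4 : ℝ≥0∞)⁻¹) (e z) =
      ({x, y, w₁, w₂} : Set V).indicator (fun _ => 4⁻¹) z := by
    simp only [Set.indicator_apply, ← he, e.injective.mem_set_image]
  have hμ₁ (z : V) : ({x, y, w₁, w₂} : Set V).indicator (fun _ => (4 : ℝ≥0∞)⁻¹) z ≤ 1 :=
    Set.indicator_apply_le' (fun _ => ENNReal.inv_le_one.2 (by norm_num)) fun _ => zero_le_one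
  calc W1 G _ _ ≤ ∑' z, (G.dist z (e z) : ℝ≥0∞) *
        (↑({x, y, w₁, w₂} : Finset V) : Set V).indicator (fun _ => 4⁻¹) z := by
        simpa using W1_le_tsum_dist_equiv G e hμ₁ hμ₂
    _ = (G.dist w₁ u₁ + G.dist w₂ u₂ : ℝ≥0∞) * 4⁻¹ := by
        rw [tsum_mul_indicator_const]
        simp [hex, hey, hew₁, hew₂, hnd]
    _ ≤ (2 + 2) * 4⁻¹ := by gcongr <;> exact_mod_cast ‹_›
    _ = 1 := by norm_num [ENNReal.mul_inv_cancel]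

theorem one_le_W1_indicator (hnd : [x, y, u₁, u₂, w₁, w₂].Nodup) (hxy : G.Adj x y)
    (hyu₁ : G.Adj y u₁) (hyu₂ : G.Adj y u₂)
    (hdist : ∀ w ∈ [w₁, w₂], ∀ u ∈ [u₁, u₂], 2 ≤ G.dist w u) :
    1 ≤ W1 G (({x, y, w₁, w₂} : Set V).indicator fun _ => 4⁻¹)
      (({x, y, u₁, u₂} : Set V).indicator fun _ => 4⁻¹) := by
  classical
  simp only [List.nodup_cons, List.mem_cons, List.not_mem_nil, or_false, not_or,
    List.nodup_nil, and_true] at hnd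
  simp only [List.mem_cons, List.not_mem_nil, or_false, forall_eq_or_imp, forall_eq] at hdist
  rw [show ({x, y, w₁, w₂} : Set V) = ↑({x, y, w₁, w₂} : Finset V) by simp,
    show ({x, y, u₁, u₂} : Set V) = ↑({x, y, u₁, u₂} : Finset V) by simp]
  set S : Finset V := {x, y, w₁, w₂} with hS
  set T : Finset V := {x, y, u₁, u₂} with hT
  let f : V → ℕ := fun z => min (G.dist z u₁) (G.dist z u₂)
  have hf (a b : V) (hb : b ∈ T) : f a ≤ G.dist a b + f b := by
    have hby : G.Reachable b y := by
      simp only [hT, Finset.mem_insert, Finset.mem_singleton] at hb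
      rcases hb with rfl | rfl | rfl | rfl
      exacts [hxy.reachable, .rfl, hyu₁.reachable.symm, hyu₂.reachable.symm]
    have h₁ := (hby.trans hyu₁.reachable).dist_triangle_right a
    have h₂ := (hby.trans hyu₂.reachable).dist_triangle_right a
    simp only [f]
    omega
  have hgap : ∑ z ∈ T, f z + 4 ≤ ∑ z ∈ S, f z := by
    have hfu₁ : f u₁ = 0 := by simp [f]
    have hfu₂ : f u₂ = 0 := by simp [f]
    have hfw₁ : 2 ≤ f w₁ := le_min hdist.1.1 hdist.1.2
    have hfw₂ : 2 ≤ f w₂ := le_min hdist.2.1 hdist.2.2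
    simp only [hS, hT, Finset.sum_insert, Finset.mem_insert, Finset.mem_singleton,
      Finset.sum_singleton, hnd, or_self, not_false_eq_true, hfu₁, hfu₂]
    omega
  have hfin : ((∑ z ∈ T, f z : ℕ) : ℝ≥0∞) * 4⁻¹ ≠ ⊤ := by finiteness
  refine (ENNReal.add_le_add_iff_right hfin).1 ?_
  calc 1 + ((∑ z ∈ T, f z : ℕ) : ℝ≥0∞) * 4⁻¹ = ((∑ z ∈ T, f z + 4 : ℕ) : ℝ≥0∞) * 4⁻¹ := by
        rw [Nat.cast_add, add_mul, Nat.cast_ofNat,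
          ENNReal.mul_inv_cancel (by norm_num) (by norm_num), add_comm]
    _ ≤ ((∑ z ∈ S, f z : ℕ) : ℝ≥0∞) * 4⁻¹ := mul_le_mul_left (by exact_mod_cast hgap) _
    _ = ∑' z, (f z : ℝ≥0∞) * (S : Set V).indicator (fun _ => 4⁻¹) z := by
        rw [tsum_mul_indicator_const, Nat.cast_sum]
    _ ≤ W1 G _ _ + ∑' z, (f z : ℝ≥0∞) * (T : Set V).indicator (fun _ => 4⁻¹) z :=
        tsum_mul_le_W1_add G _ fun a b _ hb => by
          exact_mod_cast hf a b (Set.mem_of_indicator_ne_zero hb)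
    _ = _ := by rw [tsum_mul_indicator_const, Nat.cast_sum]

end Configuration

theorem twoPentagons_W1_eq_one {V : Type*} (G : SimpleGraph V) [G.LocallyFinite]
    (hreg : G.IsRegularOfDegree 3) (hgirth : 5 ≤ G.egirth) (x y : V) (hxy : G.Adj x y)
    (hpent : TwoPentagons G x y) :
    W1 G (muMeasure G (1/4) x) (muMeasure G (1/4) y) = 1 := by
  obtain ⟨u₁, v₁, w₁, u₂, v₂, w₂, hyu₁, hu₁v₁, hv₁w₁, hw₁x, hyu₂, hu₂v₂, hv₂w₂, hw₂x, hnd⟩ :=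
    hpent.exists_vertices
  have hμ (z : V) :
      muMeasure G (1/4) z = (insert z (G.neighborSet z)).indicator fun _ => 4⁻¹ := by
    convert muMeasure_eq_indicator G (hreg z) using 2 <;> norm_num
  have hNx : G.neighborSet x = {y, w₁, w₂} := neighborSet_eq_of_degree_eq_three (hreg x)
    hxy hw₁x.symm hw₂x.symm (hnd.sublist (by simp [List.sublist_cons_iff]))
  have hNy : G.neighborSet y = {x, u₁, u₂} := neighborSet_eq_of_degree_eq_three (hreg y)
    hxy.symm hyu₁ hyu₂ (hnd.sublist (by simp [List.sublist_cons_iff]))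
  rw [hμ x, hμ y, hNx, hNy, Set.insert_comm y x]
  refine le_antisymm (W1_indicator_le_one hnd ?_ ?_) (one_le_W1_indicator hnd hxy hyu₁ hyu₂ ?_)
  · exact dist_le (.cons hv₁w₁.symm (.cons hu₁v₁.symm .nil))
  · exact dist_le (.cons hv₂w₂.symm (.cons hu₂v₂.symm .nil))
  · simp only [List.mem_cons, List.not_mem_nil, or_false, forall_eq_or_imp, forall_eq]
    refine ⟨⟨?_, ?_⟩, ?_, ?_⟩ <;>
      exact two_le_dist_of_five_le_egirth hgirth ‹_› hxy ‹_› (by grind [List.nodup_cons])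
        (by grind [List.nodup_cons]) (by grind [List.nodup_cons])

end RicciFlatCubic
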